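/- Let S be a bi-ideal-free semiring such that for all a, b ∈ S there exists c ∈ S with c ≤_S a and c ≤_S b. Then M_n(S) is bi-ideal-free for every n ≥ 1. -/

import Mathlib

/-- A semiring in the sense of the paper: associative `+` and `*`, `+` commutative,
`*` distributing over `+` from both sides; no zero or unity assumed. -/
class PSemiring (S : Type) extends AddCommSemigroup S, Semigroup S where
  left_distrib : ∀ a b c : S, a * (b + c) = a * b + a * c
  right_distrib : ∀ a b c : S, (a + b) * c = a * c + b * c

section Defs
variable {T : Type} [Add T] [Mul T]

def MulAbsorbing (w : T) : Prop := ∀ a : T, a * w = w ∧ w * a = w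
def AddAbsorbing (w : T) : Prop := ∀ a : T, a + w = w
def AddNeutral (w : T) : Prop := ∀ a : T, a + w = a
def BiAbsorbing (w : T) : Prop := MulAbsorbing w ∧ AddAbsorbing w
def IsZero (w : T) : Prop := MulAbsorbing w ∧ AddNeutral w
def IsUnity (w : T) : Prop := ∀ a : T, w * a = a ∧ a * w = a

def IsBiIdeal (I : Set T) : Prop :=
  I.Nonempty ∧ ∀ a ∈ I, ∀ s : T, a + s ∈ I ∧ a * s ∈ I ∧ s * a ∈ I

def IsCongruence (r : T → T → Prop) : Prop :=
  Equivalence r ∧ (∀ a b c d : T, r a b → r c d → r (a + c) (b + d)) ∧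
    (∀ a b c d : T, r a b → r c d → r (a * c) (b * d))

/-- The standard quasiordering on a semiring. -/
def leS (a b : T) : Prop := a = b ∨ ∃ c : T, a + c = b

/-- `addPow m b` is the `(m+1)`-fold sum `b + ⋯ + b`. -/
def addPow : ℕ → T → T
  | 0, b => b
  | m + 1, b => addPow m b + b

end Defs

def CongSimple (T : Type) [Add T] [Mul T] : Prop :=
  (∃ a b : T, a ≠ b) ∧
    ∀ r : T → T → Prop, IsCongruence r →
      (∀ a b : T, r a b ↔ a = b) ∨ (∀ a b : T, r a b)

def BiIdealSimple (T : Type) [Add T] [Mul T] : Prop :=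
  (∃ a b : T, a ≠ b) ∧
    ∀ I : Set T, IsBiIdeal I → (∃ w : T, I = {w}) ∨ I = Set.univ

def BiIdealFree (T : Type) [Add T] [Mul T] : Prop :=
  (∃ a b : T, a ≠ b) ∧ ∀ I : Set T, IsBiIdeal I → I = Set.univ

/-- Sum of a nonempty family indexed by `Fin (n+1)`. -/
def finSum {S : Type} [Add S] : ∀ {n : ℕ}, (Fin (n + 1) → S) → S
  | 0, f => f 0
  | n + 1, f => finSum (fun i : Fin (n + 1) => f i.castSucc) + f (Fin.last (n + 1))

/-- `Mat n S` is the semiring of `(n+1) × (n+1)` matrices over `S`. -/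
structure Mat (n : ℕ) (S : Type) where
  entry : Fin (n + 1) → Fin (n + 1) → S

instance {n : ℕ} {S : Type} [Add S] : Add (Mat n S) :=
  ⟨fun A B => ⟨fun i j => A.entry i j + B.entry i j⟩⟩

instance {n : ℕ} {S : Type} [Add S] [Mul S] : Mul (Mat n S) :=
  ⟨fun A B => ⟨fun i j => finSum (fun k => A.entry i k * B.entry k j)⟩⟩

/-- The constant matrix `ā`. -/
def Mat.const (n : ℕ) {S : Type} (a : S) : Mat n S := ⟨fun _ _ => a⟩


/-!
Every element of a bi-ideal-free semiring `S` is a sum, since `S + S` is a bi-ideal. For a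
bi-ideal `I` of `M_n(S)`, the scalars `c` whose constant matrix `c̄` lies in `I` then form a
bi-ideal of `S`: `c̄ * B` is constant whenever all columns of `B` are the same vector, and any
scalar is the sum of such a vector. This set is nonempty because `ā A ā` is constant, so all
constant matrices lie in `I`. Finally, writing each entry as `B i j = x i j + y i j` and taking
a common lower bound `c` of the `x i j` for `≤_S`, every matrix `B` is `c̄ + D` for some `D`.
-/

section LeS

variable {T : Type} [AddSemigroup T]

lemma leS_trans {a b c : T} (hab : leS a b) (hbc : leS b c) : leS a c := by
  rcases hab with rfl | ⟨d, rfl⟩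
  · exact hbc
  rcases hbc with rfl | ⟨e, rfl⟩
  · exact Or.inr ⟨d, rfl⟩
  · exact Or.inr ⟨d + e, (add_assoc _ _ _).symm⟩

instance : IsTrans T (flip leS) := ⟨fun _ _ _ hab hbc => leS_trans hbc hab⟩

lemma exists_leS_forall (hd : ∀ a b : T, ∃ c : T, leS c a ∧ leS c b)
    {ι : Type} [Finite ι] [Nonempty ι] (g : ι → T) : ∃ c, ∀ i, leS c (g i) := by
  classical
  have : Fintype ι := Fintype.ofFinite ι
  have : Nonempty T := ⟨g (Classical.arbitrary ι)⟩
  obtain ⟨c, hc⟩ := Directed.finset_le (r := flip leS) (f := id) hd (Finset.univ.image g)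
  exact ⟨c, fun i => hc (g i) (Finset.mem_image_of_mem g (Finset.mem_univ i))⟩

/-- Taking a lower bound of the first summands makes the bound strict, i.e. witnessed by a
summand even where the bound is attained. -/
lemma exists_add_eq_forall (hd : ∀ a b : T, ∃ c : T, leS c a ∧ leS c b)
    (hsplit : ∀ b : T, ∃ x y : T, x + y = b)
    {ι : Type} [Finite ι] [Nonempty ι] (g : ι → T) : ∃ c, ∀ i, ∃ d, c + d = g i := by
  choose x y hxy using fun i => hsplit (g i)
  obtain ⟨c, hc⟩ := exists_leS_forall hd x
  refine ⟨c, fun i => ?_⟩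
  rcases hc i with h | ⟨e, he⟩
  · exact ⟨y i, h ▸ hxy i⟩
  · exact ⟨e + y i, by rw [← add_assoc, he, hxy]⟩

end LeS

lemma BiIdealFree.exists_add_eq {S : Type} [PSemiring S] (hS : BiIdealFree S) (b : S) :
    ∃ x y : S, x + y = b := by
  obtain ⟨⟨a, -, -⟩, hfree⟩ := hS
  have hsums : IsBiIdeal {b : S | ∃ x y : S, x + y = b} := by
    refine ⟨⟨a + a, a, a, rfl⟩, ?_⟩
    rintro _ ⟨x, y, rfl⟩ s
    exact ⟨⟨x, y + s, (add_assoc _ _ _).symm⟩,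
      ⟨x * s, y * s, (PSemiring.right_distrib _ _ _).symm⟩,
      ⟨s * x, s * y, (PSemiring.left_distrib _ _ _).symm⟩⟩
  exact Set.eq_univ_iff_forall.mp (hfree _ hsums) b

section FinSum

variable {S : Type}

lemma exists_finSum_eq [Add S] (hsplit : ∀ b : S, ∃ x y : S, x + y = b) :
    ∀ (m : ℕ) (s : S), ∃ f : Fin (m + 1) → S, finSum f = s
  | 0, s => ⟨fun _ => s, rfl⟩
  | m + 1, s => by
    obtain ⟨x, y, rfl⟩ := hsplit s
    obtain ⟨f, rfl⟩ := exists_finSum_eq hsplit m x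
    refine ⟨Fin.snoc f y, ?_⟩
    simp only [finSum, Fin.snoc_castSucc, Fin.snoc_last]

variable [PSemiring S]

lemma finSum_mul : ∀ {m : ℕ} (f : Fin (m + 1) → S) (a : S),
    finSum (fun k => f k * a) = finSum f * a
  | 0, _, _ => rfl
  | _ + 1, f, a => by
    simp only [finSum, finSum_mul (fun i => f i.castSucc) a, PSemiring.right_distrib]

lemma mul_finSum : ∀ {m : ℕ} (a : S) (f : Fin (m + 1) → S),
    finSum (fun k => a * f k) = a * finSum f
  | 0, _, _ => rfl
  | _ + 1, a, f => by
    simp only [finSum, mul_finSum a (fun i => f i.castSucc), PSemiring.left_distrib]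

end FinSum

namespace Mat

variable {n : ℕ} {S : Type}

lemma ext_entry {A B : Mat n S} (h : ∀ i j, A.entry i j = B.entry i j) : A = B := by
  cases A
  cases B
  congr 1
  funext i j
  exact h i j

lemma const_injective : Function.Injective (Mat.const n : S → Mat n S) :=
  fun _ _ h => congrFun (congrFun (congrArg Mat.entry h) 0) 0

def col (f : Fin (n + 1) → S) : Mat n S := ⟨fun k _ => f k⟩

def row (f : Fin (n + 1) → S) : Mat n S := ⟨fun _ k => f k⟩

lemma const_add_const [Add S] (a b : S) : const n a + const n b = const n (a + b) := rfl

variable [PSemiring S]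

lemma const_mul_col (a : S) (f : Fin (n + 1) → S) :
    const n a * col f = const n (a * finSum f) :=
  ext_entry fun _ _ => mul_finSum a f

lemma row_mul_const (f : Fin (n + 1) → S) (a : S) :
    row f * const n a = const n (finSum f * a) :=
  ext_entry fun _ _ => finSum_mul f a

lemma exists_const_mul_mul_const_eq (a : S) (A : Mat n S) :
    ∃ u, const n a * (A * const n a) = const n u :=
  ⟨finSum fun k => a * finSum fun l => A.entry k l * a, ext_entry fun _ _ => rfl⟩

end Mat

section BiIdeal

variable {n : ℕ} {S : Type} [PSemiring S] {I : Set (Mat n S)}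

lemma IsBiIdeal.isBiIdeal_setOf_const_mem (hI : IsBiIdeal I)
    (hsplit : ∀ b : S, ∃ x y : S, x + y = b) : IsBiIdeal {c : S | Mat.const n c ∈ I} := by
  obtain ⟨⟨A, hA⟩, hclosed⟩ := hI
  obtain ⟨u, hu⟩ := Mat.exists_const_mul_mul_const_eq (A.entry 0 0) A
  have hu_mem : Mat.const n u ∈ I := hu ▸ (hclosed _ (hclosed A hA _).2.1 _).2.2
  refine ⟨⟨u, hu_mem⟩, fun c (hc : Mat.const n c ∈ I) s => ⟨?_, ?_, ?_⟩⟩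
  · show Mat.const n (c + s) ∈ I
    exact Mat.const_add_const c s ▸ (hclosed _ hc _).1
  · obtain ⟨f, rfl⟩ := exists_finSum_eq hsplit n s
    show Mat.const n (c * finSum f) ∈ I
    exact Mat.const_mul_col c f ▸ (hclosed _ hc _).2.1
  · obtain ⟨f, rfl⟩ := exists_finSum_eq hsplit n s
    show Mat.const n (finSum f * c) ∈ I
    exact Mat.row_mul_const f c ▸ (hclosed _ hc _).2.2

lemma IsBiIdeal.const_mem (hI : IsBiIdeal I) (hS : BiIdealFree S) (c : S) :
    Mat.const n c ∈ I :=
  Set.eq_univ_iff_forall.mp (hS.2 _ (hI.isBiIdeal_setOf_const_mem hS.exists_add_eq)) c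

end BiIdeal

/-- if `S` is bi-ideal-free and `≤_S` is downwards directed, then
`M_n(S)` is bi-ideal-free for every `n ≥ 1` (`Mat n S` has size `n+1`). -/
theorem stmt16 {S : Type} [PSemiring S] (hS : BiIdealFree S)
    (hd : ∀ a b : S, ∃ c : S, leS c a ∧ leS c b) (n : ℕ) :
    BiIdealFree (Mat n S) := by
  obtain ⟨a, b, hab⟩ := hS.1
  refine ⟨⟨Mat.const n a, Mat.const n b, Mat.const_injective.ne hab⟩, fun I hI => ?_⟩
  refine Set.eq_univ_of_forall fun B => ?_
  obtain ⟨c, hc⟩ := exists_add_eq_forall hd hS.exists_add_eq fun p : Fin (n + 1) × Fin (n + 1) =>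
    B.entry p.1 p.2
  choose D hD using fun i j => hc (i, j)
  have hB : Mat.const n c + ⟨D⟩ = B := Mat.ext_entry hD
  exact hB ▸ (hI.2 _ (hI.const_mem hS c) _).1
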